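/- On 𝔗_b, the modified centred triangular maximal operator 𝒯' is unbounded on L^1: for a point o, the function 𝒯'δ_o satisfies 𝒯'δ_o(x) ≥ 1/(2 b^{|x|} + 1) for every descendant x of o, and ∑_{x : o ⪰ x} 𝒯'δ_o(x) = ∞. -/

import Mathlib

open scoped ENNReal NNReal
open Set

/-- A locally finite tree presented via the data induced by a fixed geodesic ray `ω`:
a predecessor map `pred`, a height (Busemann) function `ht` increasing by one along `pred`,
finite successor sets, and connectedness (any two vertices have a common ancestor). -/
structure TreeData (V : Type*) where
  pred : V → V
  ht : V → ℤ
  ht_pred : ∀ x, ht (pred x) = ht x + 1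
  fiber_finite : ∀ x, {y | pred y = x}.Finite
  connected : ∀ x y, ∃ k l : ℕ, pred^[k] x = pred^[l] y

namespace TreeData

variable {V : Type*}

/-- The set of successors of a vertex. -/
def succs (t : TreeData V) (x : V) : Set V := {y | t.pred y = x}

/-- Every vertex has at least 3 neighbours, i.e. at least 2 successors. -/
def Thick (t : TreeData V) : Prop := ∀ x, 2 ≤ (t.succs x).ncard

/-- Homogeneous tree `𝔗_b`: every vertex has exactly `b+1` neighbours, i.e. `b` successors. -/
def Homog (t : TreeData V) (b : ℕ) : Prop := ∀ x, (t.succs x).ncard = b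

/-- The triangle with vertex `x` and height `R`: all descendants of `x` within `R` generations. -/
def tri (t : TreeData V) (x : V) (R : ℕ) : Set V := {y | ∃ j ≤ R, t.pred^[j] y = x}

/-- The base of the triangle with vertex `x` and height `R`: the `R`-fold successors of `x`. -/
def base (t : TreeData V) (x : V) (R : ℕ) : Set V := {y | t.pred^[R] y = x}

/-- The graph distance on the tree. -/
noncomputable def dist (t : TreeData V) (x y : V) : ℕ :=
  sInf {n | ∃ k l : ℕ, k + l = n ∧ t.pred^[k] x = t.pred^[l] y}

/-- Number of points of a set, as an element of `ℝ≥0∞` (counting measure). -/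
noncomputable def esize (E : Set V) : ℝ≥0∞ := ∑' _ : E, (1 : ℝ≥0∞)

/-- The average of `|f|` over a set, with respect to counting measure. -/
noncomputable def setAvg (t : TreeData V) (S : Set V) (f : V → ℝ) : ℝ≥0∞ :=
  (∑' y : S, (‖f y‖₊ : ℝ≥0∞)) / (S.ncard : ℝ≥0∞)

/-- The centred triangular maximal operator `𝒯`. -/
noncomputable def cmax (t : TreeData V) (f : V → ℝ) (x : V) : ℝ≥0∞ :=
  ⨆ R : ℕ, t.setAvg (t.tri x R) f

/-- The uncentred triangular maximal operator `𝒰`. -/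
noncomputable def umax (t : TreeData V) (f : V → ℝ) (x : V) : ℝ≥0∞ :=
  ⨆ (v : V) (R : ℕ) (_ : x ∈ t.tri v R), t.setAvg (t.tri v R) f

/-- The uncentred base maximal operator `ℬᵘ`. -/
noncomputable def ubmax (t : TreeData V) (f : V → ℝ) (x : V) : ℝ≥0∞ :=
  ⨆ (v : V) (R : ℕ) (_ : x ∈ t.tri v R), t.setAvg (t.base v R) f

/-- The modified triangle `T'_r(x) = T_r(x) ∪ {p^r(x)}`. -/
def mtri (t : TreeData V) (x : V) (r : ℕ) : Set V := t.tri x r ∪ {t.pred^[r] x}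

/-- The modified centred triangular maximal operator `𝒯'`. -/
noncomputable def cmax' (t : TreeData V) (f : V → ℝ) (x : V) : ℝ≥0∞ :=
  ⨆ r : ℕ, t.setAvg (t.mtri x r) f

/-- The modified uncentred triangular maximal operator `𝒰'`. -/
noncomputable def umax' (t : TreeData V) (f : V → ℝ) (x : V) : ℝ≥0∞ :=
  ⨆ (v : V) (r : ℕ) (_ : x ∈ t.mtri v r), t.setAvg (t.mtri v r) f

/-- The `ℓ^p` norm with respect to counting measure, for `p ∈ [1,∞]`. -/
noncomputable def eLp (p : ℝ≥0∞) (g : V → ℝ≥0∞) : ℝ≥0∞ :=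
  if p = ∞ then ⨆ v, g v else (∑' v, g v ^ p.toReal) ^ (1 / p.toReal)

/-- `|f|` as an `ℝ≥0∞`-valued function. -/
noncomputable def nn (f : V → ℝ) (x : V) : ℝ≥0∞ := (‖f x‖₊ : ℝ≥0∞)

/-- The point mass at `o`. -/
noncomputable def delta (o : V) : V → ℝ := ({o} : Set V).indicator fun _ => 1

end TreeData

/-
For a descendant `x` of `o` at distance `k`, the modified triangle `T'_k(x)` reaches up to
`p^k(x) = o`, so it contains the mass of `δ_o` while having at most `2 b^k + 1` points; this gives
`𝒯'δ_o(x) ≥ 1/(2b^k + 1)`. There are `b^k` descendants at distance `k`, so each generation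
contributes at least `b^k/(2b^k + 1) ≥ 1/3` to the sum, which therefore diverges.
-/

open Function

lemma ENNReal.inv_three_le_div_two_mul_add_one {B : ℝ≥0∞} (hB : 1 ≤ B) (hB' : B ≠ ⊤) :
    3⁻¹ ≤ B / (2 * B + 1) := by
  have hB0 : B ≠ 0 := (zero_lt_one.trans_le hB).ne'
  calc (3 : ℝ≥0∞)⁻¹ = B / (3 * B) := by
        rw [ENNReal.div_eq_inv_mul, ENNReal.mul_inv (by simp) (by simp), mul_assoc,
          ENNReal.inv_mul_cancel hB0 hB', mul_one]
    _ ≤ B / (2 * B + 1) := by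
        gcongr
        calc 2 * B + 1 ≤ 2 * B + B := by gcongr
          _ = 3 * B := by ring

namespace TreeData

variable {V : Type*} (t : TreeData V)

lemma ht_iterate_pred (x : V) (k : ℕ) : t.ht (t.pred^[k] x) = t.ht x + k := by
  induction k with
  | zero => simp
  | succ k ih =>
    rw [iterate_succ_apply', t.ht_pred, ih]
    push_cast
    ring

lemma eq_of_iterate_pred_eq {x o : V} {k l : ℕ} (hk : t.pred^[k] x = o)
    (hl : t.pred^[l] x = o) : k = l := by
  have hk' := t.ht_iterate_pred x k
  have hl' := t.ht_iterate_pred x l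
  rw [hk] at hk'
  rw [hl] at hl'
  omega

lemma dist_eq_of_iterate_pred_eq {o x : V} {k : ℕ} (hk : t.pred^[k] x = o) :
    t.dist o x = k := by
  have hmem : k ∈ {n | ∃ a c : ℕ, a + c = n ∧ t.pred^[a] o = t.pred^[c] x} :=
    ⟨0, k, by simp [hk]⟩
  refine le_antisymm (Nat.sInf_le hmem) ?_
  obtain ⟨a, c, hac, hmeet⟩ := Nat.sInf_mem ⟨k, hmem⟩
  have ho := t.ht_iterate_pred o a
  have hc := t.ht_iterate_pred x c
  have hx := t.ht_iterate_pred x k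
  rw [hmeet, hc] at ho
  rw [hk] at hx
  unfold TreeData.dist
  omega

lemma base_zero (x : V) : t.base x 0 = {x} := by
  ext y
  simp [base]

lemma base_succ (x : V) (n : ℕ) : t.base x (n + 1) = t.pred ⁻¹' t.base x n := by
  ext y
  simp [base, iterate_succ_apply]

lemma finite_preimage_pred {S : Set V} (hS : S.Finite) : (t.pred ⁻¹' S).Finite := by
  rw [← Set.biUnion_of_singleton S, Set.preimage_iUnion₂]
  exact hS.biUnion fun x _ => t.fiber_finite x

lemma ncard_preimage_pred {b : ℕ} (hhom : t.Homog b) {S : Set V} (hS : S.Finite) :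
    (t.pred ⁻¹' S).ncard = b * S.ncard := by
  induction S, hS using Set.Finite.induction_on with
  | empty => simp
  | @insert a S ha hS ih =>
    have hdisj : Disjoint (t.succs a) (t.pred ⁻¹' S) :=
      Set.disjoint_left.mpr fun y hy hyS => ha (hy ▸ hyS)
    rw [Set.insert_eq, Set.preimage_union, show t.pred ⁻¹' {a} = t.succs a from rfl,
      Set.ncard_union_eq hdisj (t.fiber_finite a) (t.finite_preimage_pred hS), hhom a, ih,
      ← Set.insert_eq, Set.ncard_insert_of_notMem ha hS]
    ring

lemma finite_base (x : V) (n : ℕ) : (t.base x n).Finite := by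
  induction n with
  | zero => simp [base_zero]
  | succ n ih => simpa [base_succ] using t.finite_preimage_pred ih

lemma ncard_base {b : ℕ} (hhom : t.Homog b) (x : V) (n : ℕ) : (t.base x n).ncard = b ^ n := by
  induction n with
  | zero => simp [base_zero]
  | succ n ih => rw [base_succ, t.ncard_preimage_pred hhom (t.finite_base x n), ih, pow_succ']

lemma tri_zero (x : V) : t.tri x 0 = {x} := by
  ext y
  simp [tri]

lemma tri_succ (x : V) (k : ℕ) : t.tri x (k + 1) = t.tri x k ∪ t.base x (k + 1) := by
  ext y
  simp only [tri, base, Set.mem_union, Set.mem_ofPred_eq, Nat.le_succ_iff_eq_or_le]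
  constructor
  · rintro ⟨j, rfl | hj, hy⟩
    exacts [Or.inr hy, Or.inl ⟨j, hj, hy⟩]
  · rintro (⟨j, hj, hy⟩ | hy)
    exacts [⟨j, Or.inr hj, hy⟩, ⟨k + 1, Or.inl rfl, hy⟩]

lemma ncard_tri_le {b : ℕ} (hb : 2 ≤ b) (hhom : t.Homog b) (x : V) (k : ℕ) :
    (t.tri x k).ncard ≤ 2 * b ^ k := by
  induction k with
  | zero => simp [tri_zero]
  | succ k ih =>
    have hgrow : 2 * b ^ k ≤ b ^ (k + 1) := by
      rw [pow_succ']
      exact Nat.mul_le_mul_right _ hb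
    calc (t.tri x (k + 1)).ncard ≤ (t.tri x k).ncard + (t.base x (k + 1)).ncard := by
          rw [tri_succ]
          exact Set.ncard_union_le _ _
      _ ≤ 2 * b ^ (k + 1) := by
          rw [t.ncard_base hhom]
          omega

lemma ncard_mtri_le {b : ℕ} (hb : 2 ≤ b) (hhom : t.Homog b) (x : V) (k : ℕ) :
    (t.mtri x k).ncard ≤ 2 * b ^ k + 1 :=
  (Set.ncard_union_le _ _).trans <| by
    rw [Set.ncard_singleton]
    exact Nat.add_le_add_right (t.ncard_tri_le hb hhom x k) 1

lemma one_le_tsum_nnnorm_delta {o : V} {S : Set V} (ho : o ∈ S) :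
    1 ≤ ∑' y : S, (‖delta o y‖₊ : ℝ≥0∞) := by
  simpa [delta] using ENNReal.le_tsum (f := fun y : S => (‖delta o y‖₊ : ℝ≥0∞)) ⟨o, ho⟩

lemma inv_le_cmax'_delta {b : ℕ} (hb : 2 ≤ b) (hhom : t.Homog b) {o x : V} {k : ℕ}
    (hk : t.pred^[k] x = o) : (2 * (b : ℝ≥0∞) ^ k + 1)⁻¹ ≤ t.cmax' (delta o) x := by
  have hcard : ((t.mtri x k).ncard : ℝ≥0∞) ≤ 2 * (b : ℝ≥0∞) ^ k + 1 := by
    exact_mod_cast t.ncard_mtri_le hb hhom x k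
  calc (2 * (b : ℝ≥0∞) ^ k + 1)⁻¹ = 1 / (2 * (b : ℝ≥0∞) ^ k + 1) := (one_div _).symm
    _ ≤ t.setAvg (t.mtri x k) (delta o) :=
        ENNReal.div_le_div (one_le_tsum_nnnorm_delta (Or.inr hk.symm)) hcard
    _ ≤ t.cmax' (delta o) x := le_iSup (fun r => t.setAvg (t.mtri x r) (delta o)) k

lemma inv_three_le_tsum_base_cmax'_delta {b : ℕ} (hb : 2 ≤ b) (hhom : t.Homog b) (o : V)
    (n : ℕ) : 3⁻¹ ≤ ∑' x : t.base o n, t.cmax' (delta o) x := by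
  have hencard : ((t.base o n).encard : ℝ≥0∞) = (b : ℝ≥0∞) ^ n := by
    rw [← (t.finite_base o n).cast_ncard_eq, t.ncard_base hhom]
    push_cast
    rfl
  have hbn : 1 ≤ (b : ℝ≥0∞) ^ n := one_le_pow₀ (by exact_mod_cast (by omega : 1 ≤ b))
  calc (3 : ℝ≥0∞)⁻¹ ≤ (b : ℝ≥0∞) ^ n / (2 * (b : ℝ≥0∞) ^ n + 1) :=
        ENNReal.inv_three_le_div_two_mul_add_one hbn (by simp)
    _ = ∑' _ : t.base o n, (2 * (b : ℝ≥0∞) ^ n + 1)⁻¹ := by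
        rw [ENNReal.tsum_set_const, hencard, div_eq_mul_inv]
    _ ≤ ∑' x : t.base o n, t.cmax' (delta o) x :=
        ENNReal.tsum_le_tsum fun x => t.inv_le_cmax'_delta hb hhom x.2

lemma descendants_eq_iUnion_base (o : V) :
    {x | ∃ k : ℕ, t.pred^[k] x = o} = ⋃ n, t.base o n := by
  ext x
  simp [base]

lemma pairwiseDisjoint_base (o : V) : Set.univ.PairwiseDisjoint (t.base o) :=
  fun _ _ _ _ hne => Set.disjoint_left.mpr fun _ hk hl => hne (t.eq_of_iterate_pred_eq hk hl)

end TreeData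

/-- On `𝔗_b`, the modified centred maximal operator `𝒯'` is unbounded on
`L^1`: `𝒯'δ_o(x) ≥ 1/(2b^{|x|}+1)` for every descendant `x` of `o`, and the sum of
`𝒯'δ_o` over the descendants of `o` diverges. -/
theorem stmt17 {V : Type*} (t : TreeData V) (b : ℕ) (hb : 2 ≤ b) (hhom : t.Homog b)
    (o : V) :
    (∀ x, (∃ k : ℕ, t.pred^[k] x = o) →
        ((2 * (b : ℝ≥0∞) ^ (t.dist o x) + 1))⁻¹ ≤ t.cmax' (TreeData.delta o) x) ∧
      ∑' x : {x | ∃ k : ℕ, t.pred^[k] x = o}, t.cmax' (TreeData.delta o) x = ∞ := by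
  refine ⟨fun x ⟨k, hk⟩ => ?_, ?_⟩
  · rw [t.dist_eq_of_iterate_pred_eq hk]
    exact t.inv_le_cmax'_delta hb hhom hk
  · rw [t.descendants_eq_iUnion_base, ENNReal.tsum_biUnion (t.pairwiseDisjoint_base o)]
    exact top_unique <| calc
      ∞ = ∑' _ : ℕ, (3 : ℝ≥0∞)⁻¹ := (ENNReal.tsum_const_eq_top_of_ne_zero (by norm_num)).symm
      _ ≤ _ := ENNReal.tsum_le_tsum (t.inv_three_le_tsum_base_cmax'_delta hb hhom o)
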